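/- With the notation of the four-point analysis, for any nearest-neighbor path $S$ in $\mathbb{Z}^d$ and charges $q_0,\dots,q_{N-1}$, one has $H_N \le \sum_{\varepsilon\in\{+,-\}}\sum_{p\in\{\mathrm{odd},\mathrm{even}\}}(Q_\varepsilon^p)^2 - D_N$, where $D_N=\sum_{\varepsilon,p} Q_\varepsilon^p(Q_\varepsilon^p - \varepsilon Q_N^{x_\varepsilon^p}) \ge 0$ is the charge distance to optimality. -/
import Mathlib


open MeasureTheory Filter Finset Real
open scoped ENNReal

noncomputable section

/-- Total charge at site `x` for charges `q` and path `S`, among monomers `0 ≤ i < N`. -/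
def Qof {d : ℕ} (N : ℕ) (q : ℕ → ℝ) (S : ℕ → Fin d → ℤ) (x : Fin d → ℤ) : ℝ :=
  ∑ i ∈ Finset.range N, if S i = x then q i else 0

/-- Energy `H_N = ∑_x (Q_N^x)²` (the sum over all of `ℤ^d` reduces to visited sites). -/
def Hof {d : ℕ} (N : ℕ) (q : ℕ → ℝ) (S : ℕ → Fin d → ℤ) : ℝ :=
  ∑ x ∈ (Finset.range N).image S, (Qof N q S x) ^ 2

/-- `v` is a unit step in `ℤ^d`. -/
def IsUnitStep {d : ℕ} (v : Fin d → ℤ) : Prop := (∑ j, |v j|) = 1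

/-- `S` is a nearest-neighbor path in `ℤ^d` starting at `0`. -/
def IsNNPath {d : ℕ} (S : ℕ → Fin d → ℤ) : Prop :=
  S 0 = 0 ∧ ∀ i, IsUnitStep (fun j => S (i + 1) j - S i j)

/-- Positive (`s = true`) or negative (`s = false`) part of a real charge. -/
def Qsgn (s : Bool) (r : ℝ) : ℝ := if s then max r 0 else max (-r) 0

/-- `Q_ε^p`: total charge of sign `s` at indices of parity `p`
(`p = true` means odd). -/
def Qpar (N : ℕ) (q : ℕ → ℝ) (p : Bool) (s : Bool) : ℝ :=
  ∑ i ∈ Finset.range N, if i % 2 = (if p then 1 else 0) then Qsgn s (q i) else 0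

/-- The sign `+1` / `-1` associated with `s : Bool`. -/
def sgnVal (s : Bool) : ℝ := if s then 1 else -1

/-- The parity (as an integer `1` = odd, `0` = even) associated with `p`. -/
def parInt (p : Bool) : ℤ := if p then 1 else 0

/-- The charge distance to optimality
`D_N = ∑_{ε,p} Q_ε^p (Q_ε^p - ε Q_N^{x_ε^p})`, where `x s p` is a site of
parity `p` maximizing `ε ↦ ε Q_N^x`. -/
def Ddist {d : ℕ} (N : ℕ) (q : ℕ → ℝ) (S : ℕ → Fin d → ℤ)
    (x : Bool → Bool → (Fin d → ℤ)) : ℝ :=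
  ∑ s : Bool, ∑ p : Bool,
    Qpar N q p s * (Qpar N q p s - sgnVal s * Qof N q S (x s p))

lemma Qsgn_nonneg (s : Bool) (r : ℝ) : 0 ≤ Qsgn s r := by
  cases s <;> simp [Qsgn]

lemma Qsgn_sub (r : ℝ) : Qsgn true r - Qsgn false r = r := by
  show max r 0 - max (-r) 0 = r
  rcases le_total r 0 with h | h
  · rw [max_eq_right h, max_eq_left (by linarith : (0:ℝ) ≤ -r)]; ring
  · rw [max_eq_left h, max_eq_right (by linarith : -r ≤ (0:ℝ))]; ring

lemma sum_mod_congr {α : Type*} (s : Finset α) (f g : α → ℤ)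
    (h : ∀ j ∈ s, f j % 2 = g j % 2) :
    (∑ j ∈ s, f j) % 2 = (∑ j ∈ s, g j) % 2 := by
  rw [Finset.sum_int_mod s 2 f, Finset.sum_int_mod s 2 g, Finset.sum_congr rfl h]

lemma sgn_mul_le_Qsgn (s : Bool) (r : ℝ) : sgnVal s * r ≤ Qsgn s r := by
  cases s <;> simp [sgnVal, Qsgn]

lemma parBool_iff (m : ℤ) (p : Bool) : (decide (m % 2 = 1) = p) ↔ m % 2 = parInt p := by
  have := Int.emod_two_eq m
  cases p <;> simp [parInt] <;> omega

lemma natpar (i : ℕ) (p : Bool) :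
    ((i : ℤ) % 2 = parInt p) ↔ (i % 2 = if p then 1 else 0) := by
  cases p <;> simp [parInt] <;> omega

lemma parity_sum {d : ℕ} (S : ℕ → Fin d → ℤ) (hS : IsNNPath S) (i : ℕ) :
    (∑ j, S i j) % 2 = (i : ℤ) % 2 := by
  induction i with
  | zero => simp [hS.1]
  | succ n ih =>
    have hstep := hS.2 n
    unfold IsUnitStep at hstep
    have h1 : (∑ j, S (n+1) j) = (∑ j, S n j) + ∑ j, (S (n+1) j - S n j) := by
      rw [← Finset.sum_add_distrib]
      exact Finset.sum_congr rfl fun j _ => by ring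
    have hstep' : (∑ j, |S (n+1) j - S n j|) = 1 := hstep
    have h2 : (∑ j, (S (n+1) j - S n j)) % 2 = 1 := by
      have heq : (∑ j, (S (n+1) j - S n j)) % 2
          = (∑ j, |S (n+1) j - S n j|) % 2 := by
        refine sum_mod_congr _ _ _ fun j _ => ?_
        rcases abs_choice (S (n+1) j - S n j) with h | h <;> rw [h] <;> omega
      rw [heq, hstep']; decide
    rw [h1]
    push_cast
    omega

lemma l1_bound {d : ℕ} (S : ℕ → Fin d → ℤ) (hS : IsNNPath S) (i : ℕ) :
    (∑ j, |S i j|) ≤ i := by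
  induction i with
  | zero => simp [hS.1]
  | succ n ih =>
    have hstep := hS.2 n
    unfold IsUnitStep at hstep
    have h1 : (∑ j, |S (n+1) j|) ≤ ∑ j, (|S n j| + |S (n+1) j - S n j|) := by
      refine Finset.sum_le_sum fun j _ => ?_
      have := abs_sub_abs_le_abs_sub (S (n+1) j) (S n j)
      have := abs_nonneg (S (n+1) j - S n j)
      rcases abs_cases (S (n+1) j) with ⟨h, _⟩ | ⟨h, _⟩ <;> nlinarith [abs_nonneg (S n j),
        abs_sub_abs_le_abs_sub (S (n+1) j) (S n j)]
    have h2 : (∑ j, (|S n j| + |S (n+1) j - S n j|)) = (∑ j, |S n j|) + 1 := by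
      rw [Finset.sum_add_distrib, hstep]
    push_cast
    push_cast at ih
    linarith [h1.trans_eq h2]

/-- `H_N ≤ ∑_{ε,p} (Q_ε^p)² - D_N`, and `D_N ≥ 0`. -/
theorem energy_le_four_squares_sub_Ddist {d : ℕ} (hd : 1 ≤ d) (N : ℕ)
    (q : ℕ → ℝ) (S : ℕ → Fin d → ℤ) (hS : IsNNPath S)
    (x : Bool → Bool → (Fin d → ℤ))
    (hpar : ∀ s p, (∑ j, x s p j) % 2 = parInt p)
    (hmax : ∀ s p (y : Fin d → ℤ), (∑ j, y j) % 2 = parInt p →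
      sgnVal s * Qof N q S y ≤ sgnVal s * Qof N q S (x s p)) :
    Hof N q S ≤ (∑ s : Bool, ∑ p : Bool, (Qpar N q p s) ^ 2) - Ddist N q S x ∧
      0 ≤ Ddist N q S x := by
  classical
  have hparS : ∀ i, (∑ j, S i j) % 2 = (i : ℤ) % 2 := parity_sum S hS
  set V := (Finset.range N).image S with hV
  set A : Bool → (Fin d → ℤ) → ℝ :=
    fun s y => ∑ i ∈ Finset.range N, if S i = y then Qsgn s (q i) else 0 with hA
  set c : Bool → Bool → ℝ := fun s p => sgnVal s * Qof N q S (x s p) with hc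
  -- nonnegativity of the extremal values, via an unvisited site of each parity
  have hc0 : ∀ s p, 0 ≤ c s p := by
    intro s p
    set y : Fin d → ℤ := fun j => if j = ⟨0, hd⟩ then (2 * N + parInt p) else 0 with hy
    have hsum : (∑ j, y j) = 2 * N + parInt p := by
      rw [hy]; simp
    have hpar' : (∑ j, y j) % 2 = parInt p := by
      rw [hsum]; cases p <;> simp [parInt] <;> omega
    have hQ0 : Qof N q S y = 0 := by
      rw [Qof]
      refine Finset.sum_eq_zero fun i hi => ?_
      have hne : S i ≠ y := by
        intro h
        have h1 := l1_bound S hS i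
        have h2 : (∑ j, |S i j|) = ∑ j, |y j| := by rw [h]
        have h3 : (∑ j, |y j|) = |2 * N + parInt p| := by
          rw [hy]; simp [apply_ite abs]
        have h4 : (0 : ℤ) ≤ parInt p := by cases p <;> simp [parInt]
        have h5 : |(2 * N : ℤ) + parInt p| = 2 * N + parInt p :=
          abs_of_nonneg (by positivity)
        have h6 := Finset.mem_range.1 hi
        rw [h2, h3, h5] at h1
        omega
      rw [if_neg hne]
    have := hmax s p y hpar'
    rw [hQ0, mul_zero] at this
    exact this.trans_eq (by rw [hc])
  have hA0 : ∀ s y, 0 ≤ A s y := by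
    intro s y
    refine Finset.sum_nonneg fun i _ => ?_
    by_cases h : S i = y
    · rw [if_pos h]; exact Qsgn_nonneg _ _
    · rw [if_neg h]
  have hQA : ∀ y, Qof N q S y = A true y - A false y := by
    intro y
    rw [Qof, hA, ← Finset.sum_sub_distrib]
    refine Finset.sum_congr rfl fun i _ => ?_
    by_cases h : S i = y
    · rw [if_pos h, if_pos h, if_pos h, Qsgn_sub]
    · rw [if_neg h, if_neg h, if_neg h, sub_zero]
  have hQpar0 : ∀ s p, 0 ≤ Qpar N q p s := by
    intro s p
    refine Finset.sum_nonneg fun i _ => ?_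
    by_cases h : i % 2 = (if p then 1 else 0)
    · rw [if_pos h]; exact Qsgn_nonneg _ _
    · rw [if_neg h]
  -- for a site of parity p, ε Q ≤ Q_ε^p
  have hle : ∀ s p (y : Fin d → ℤ), (∑ j, y j) % 2 = parInt p →
      sgnVal s * Qof N q S y ≤ Qpar N q p s := by
    intro s p y hy
    rw [Qof, Qpar, Finset.mul_sum]
    refine Finset.sum_le_sum fun i _ => ?_
    by_cases h : S i = y
    · have hpi : i % 2 = (if p then 1 else 0) := by
        refine (natpar i p).1 ?_
        rw [← hparS i, h, hy]
      rw [if_pos h, if_pos hpi]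
      exact sgn_mul_le_Qsgn s (q i)
    · rw [if_neg h, mul_zero]
      by_cases h2 : i % 2 = (if p then 1 else 0)
      · rw [if_pos h2]; exact Qsgn_nonneg _ _
      · rw [if_neg h2]
  -- fiberwise sums of A over parity classes give Qpar
  have hB : ∀ s p,
      (∑ y ∈ V.filter (fun y => decide ((∑ j, y j) % 2 = 1) = p), A s y)
        = Qpar N q p s := by
    intro s p
    rw [hA]
    simp only
    rw [Finset.sum_comm, Qpar]
    refine Finset.sum_congr rfl fun i hi => ?_
    rw [Finset.sum_ite_eq (V.filter (fun y => decide ((∑ j, y j) % 2 = 1) = p)) (S i)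
      (fun _ => Qsgn s (q i))]
    have hmem : S i ∈ V := Finset.mem_image_of_mem S hi
    have hiff : (S i ∈ V.filter (fun y => decide ((∑ j, y j) % 2 = 1) = p))
        ↔ (i % 2 = if p then 1 else 0) := by
      rw [Finset.mem_filter]
      constructor
      · rintro ⟨-, h⟩
        exact (natpar i p).1 (by rw [← hparS i]; exact (parBool_iff _ p).1 h)
      · intro h
        refine ⟨hmem, (parBool_iff _ p).2 ?_⟩
        rw [hparS i]
        exact (natpar i p).2 h
    rw [if_congr hiff rfl rfl]
  -- per-site bound
  have hsite : ∀ p : Bool, ∀ y ∈ V.filter (fun y => decide ((∑ j, y j) % 2 = 1) = p),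
      (Qof N q S y) ^ 2 ≤ ∑ s : Bool, c s p * A s y := by
    intro p y hy
    rw [Finset.mem_filter] at hy
    have hypar : (∑ j, y j) % 2 = parInt p := (parBool_iff _ p).1 hy.2
    have h1 : Qof N q S y ≤ c true p := by
      have := hmax true p y hypar
      simpa [sgnVal, hc] using this
    have hsF : sgnVal false = -1 := by norm_num [sgnVal]
    have h2 : -Qof N q S y ≤ c false p := by
      have := hmax false p y hypar
      rw [hsF] at this
      show -Qof N q S y ≤ sgnVal false * Qof N q S (x false p)
      rw [hsF]
      linarith
    have ha := hA0 true y
    have hb := hA0 false y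
    rw [hQA y] at h1 h2 ⊢
    rw [Fintype.sum_bool]
    rcases le_total (A false y) (A true y) with h | h
    · nlinarith [mul_nonneg (hc0 true p) hb, mul_nonneg (hc0 false p) hb,
        mul_nonneg (sub_nonneg.2 h1) (sub_nonneg.2 h)]
    · nlinarith [mul_nonneg (hc0 false p) ha, mul_nonneg (hc0 true p) ha,
        mul_nonneg (sub_nonneg.2 h2) (sub_nonneg.2 h)]
  -- main estimate
  have hmain : Hof N q S ≤ ∑ s : Bool, ∑ p : Bool, Qpar N q p s * c s p := by
    rw [Hof, ← hV,
      ← Finset.sum_fiberwise V (fun y => decide ((∑ j, y j) % 2 = 1))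
        (fun y => (Qof N q S y) ^ 2)]
    calc (∑ p : Bool, ∑ y ∈ V.filter (fun y => decide ((∑ j, y j) % 2 = 1) = p),
            (Qof N q S y) ^ 2)
        ≤ ∑ p : Bool, ∑ y ∈ V.filter (fun y => decide ((∑ j, y j) % 2 = 1) = p),
            ∑ s : Bool, c s p * A s y :=
          Finset.sum_le_sum fun p _ => Finset.sum_le_sum (hsite p)
      _ = ∑ p : Bool, ∑ s : Bool, c s p * Qpar N q p s := by
          refine Finset.sum_congr rfl fun p _ => ?_
          rw [Finset.sum_comm]
          refine Finset.sum_congr rfl fun s _ => ?_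
          rw [← Finset.mul_sum, hB s p]
      _ = ∑ s : Bool, ∑ p : Bool, Qpar N q p s * c s p := by
          rw [Finset.sum_comm]
          exact Finset.sum_congr rfl fun s _ => Finset.sum_congr rfl fun p _ =>
            mul_comm _ _
  constructor
  · have hEq : (∑ s : Bool, ∑ p : Bool, (Qpar N q p s) ^ 2) - Ddist N q S x
        = ∑ s : Bool, ∑ p : Bool, Qpar N q p s * c s p := by
      rw [Ddist, ← Finset.sum_sub_distrib]
      refine Finset.sum_congr rfl fun s _ => ?_
      rw [← Finset.sum_sub_distrib]
      refine Finset.sum_congr rfl fun p _ => ?_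
      rw [hc]
      ring
    rw [hEq]
    exact hmain
  · rw [Ddist]
    refine Finset.sum_nonneg fun s _ => Finset.sum_nonneg fun p _ => ?_
    have := hle s p (x s p) (hpar s p)
    exact mul_nonneg (hQpar0 s p) (by linarith)
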